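/- arXiv:1405.1293 — 6 statements merged into one kernel-verified Lean document; each statement's English description precedes it below -/
import Mathlib

section
/- Let n ≥ 3 and let d_1, ..., d_q be integers with each d_i ≥ 3 satisfying Σ_{i=1}^q (d_i - 2) = n - 2. Then n + Σ_{i=1}^q d_i^2 ≥ 9n - 16. -/
/-- Combinatorial core of the lower bound for the first Zagreb index: if `d_1, ..., d_q ≥ 3`
satisfy `Σ (d_i - 2) = n - 2` with `n ≥ 3`, then `n + Σ d_i² ≥ 9n - 16`. -/
theorem stmt_1 (n q : ℕ) (hn : 3 ≤ n) (d : Fin q → ℕ)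
    (hd : ∀ i, 3 ≤ d i) (hsum : ∑ i, ((d i : ℤ) - 2) = (n : ℤ) - 2) :
    9 * (n : ℤ) - 16 ≤ (n : ℤ) + ∑ i, (d i : ℤ) ^ 2 := by
  have key : ∑ i, (8 * ((d i : ℤ) - 2)) ≤ ∑ i, (d i : ℤ) ^ 2 := by
    apply Finset.sum_le_sum
    intro i _
    nlinarith [sq_nonneg ((d i : ℤ) - 4)]
  rw [← Finset.mul_sum, hsum] at key
  linarith
end

section
/- For any tree T with n ≥ 2 pendent vertices, the first Zagreb index satisfies M_1(T) ≥ 9n - 16. -/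
/-- For any tree `T` with `n ≥ 2` pendent vertices, the first Zagreb index
`M₁(T) = Σ_v d(v)²` satisfies `M₁(T) ≥ 9n - 16`. -/
theorem stmt_2 {V : Type*} [Fintype V] (G : SimpleGraph V) [DecidableRel G.Adj]
    (hT : G.IsTree) (n : ℕ) (hn : 2 ≤ n)
    (hpend : (Finset.univ.filter fun v => G.degree v = 1).card = n) :
    9 * (n : ℤ) - 16 ≤ ∑ v : V, (G.degree v : ℤ) ^ 2 := by
  classical
  set N := Fintype.card V with hNdef
  have hcard2 : 2 ≤ N := by
    have h1 : (Finset.univ.filter fun v => G.degree v = 1).card ≤ N :=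
      (Finset.card_filter_le _ _).trans (by simp [hNdef])
    omega
  -- every vertex has degree at least 1
  have hdeg : ∀ v : V, 1 ≤ G.degree v := by
    intro v
    obtain ⟨w, hw⟩ := Fintype.exists_ne_of_one_lt_card (by omega) v
    obtain ⟨p⟩ := hT.isConnected.preconnected v w
    rw [Nat.one_le_iff_ne_zero, ← Nat.pos_iff_ne_zero, G.degree_pos_iff_exists_adj]
    match p with
    | SimpleGraph.Walk.nil => exact absurd rfl hw
    | SimpleGraph.Walk.cons h q => exact ⟨_, h⟩
  set A := Finset.univ.filter fun v => G.degree v = 1 with hA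
  set B := (Finset.univ.filter fun v => ¬ G.degree v = 1).filter
      (fun v => G.degree v = 2) with hB
  set C := (Finset.univ.filter fun v => ¬ G.degree v = 1).filter
      (fun v => ¬ G.degree v = 2) with hC
  have key : ∀ f : V → ℤ, ∑ v, f v = ∑ v ∈ A, f v + ∑ v ∈ B, f v + ∑ v ∈ C, f v := by
    intro f
    rw [hA, hB, hC,
      ← Finset.sum_filter_add_sum_filter_not Finset.univ (fun v => G.degree v = 1) f,
      ← Finset.sum_filter_add_sum_filter_not
        (Finset.univ.filter fun v => ¬ G.degree v = 1) (fun v => G.degree v = 2) f]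
    ring
  -- handshake
  have hhand : ∑ v : V, G.degree v = 2 * G.edgeFinset.card :=
    SimpleGraph.sum_degrees_eq_twice_card_edges G
  have hedges : G.edgeFinset.card + 1 = N := hT.card_edgeFinset
  have hsum : ∑ v : V, (G.degree v : ℤ) = 2 * (N : ℤ) - 2 := by
    rw [← Nat.cast_sum, hhand]
    push_cast
    omega
  set b := B.card with hb
  set c := C.card with hc
  -- cardinalities
  have hcards : (n : ℤ) + b + c = N := by
    have := key (fun _ => (1 : ℤ))
    simp only [Finset.sum_const, Finset.card_univ, nsmul_eq_mul, mul_one] at this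
    rw [this, hpend]
  have hAmem : ∀ v ∈ A, G.degree v = 1 := by
    intro v hv; rw [hA] at hv; exact (Finset.mem_filter.mp hv).2
  have hBmem : ∀ v ∈ B, G.degree v = 2 := by
    intro v hv; rw [hB] at hv; exact (Finset.mem_filter.mp hv).2
  have hCmem : ∀ v ∈ C, 3 ≤ G.degree v := by
    intro v hv
    rw [hC] at hv
    have h2 := (Finset.mem_filter.mp hv).2
    have h1 := (Finset.mem_filter.mp (Finset.mem_filter.mp hv).1).2
    have := hdeg v
    omega
  set S1 := ∑ v ∈ C, (G.degree v : ℤ) with hS1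
  set S2 := ∑ v ∈ C, (G.degree v : ℤ) ^ 2 with hS2
  -- degree sum decomposition
  have hdsum : (2 : ℤ) * N - 2 = n + 2 * b + S1 := by
    rw [← hsum, key (fun v => (G.degree v : ℤ))]
    have h1 : ∑ v ∈ A, (G.degree v : ℤ) = n := by
      rw [Finset.sum_congr rfl fun v hv =>
        (by simp [hAmem v hv] : ((G.degree v : ℤ)) = 1)]
      simp [hpend]
    have h2 : ∑ v ∈ B, (G.degree v : ℤ) = 2 * b := by
      rw [Finset.sum_congr rfl fun v hv =>
        (by simp [hBmem v hv] : ((G.degree v : ℤ)) = 2)]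
      simp [hb, mul_comm]
    rw [h1, h2]
  have hS1val : S1 = (n : ℤ) + 2 * c - 2 := by
    have := hcards
    linarith [hdsum]
  -- square sum decomposition
  have hsqsum : ∑ v : V, (G.degree v : ℤ) ^ 2 = n + 4 * b + S2 := by
    rw [key (fun v => (G.degree v : ℤ) ^ 2)]
    have h1 : ∑ v ∈ A, (G.degree v : ℤ) ^ 2 = n := by
      rw [Finset.sum_congr rfl fun v hv =>
        (by simp [hAmem v hv] : ((G.degree v : ℤ)) ^ 2 = 1)]
      simp [hpend]
    have h2 : ∑ v ∈ B, (G.degree v : ℤ) ^ 2 = 4 * b := by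
      rw [Finset.sum_congr rfl fun v hv =>
        (by simp [hBmem v hv] : ((G.degree v : ℤ)) ^ 2 = 4)]
      simp [hb, mul_comm]
    rw [h1, h2]
  have hbnn : (0 : ℤ) ≤ b := Int.ofNat_nonneg b
  have hS2key : 8 * ((n : ℤ) - 2) ≤ S2 := by
    rcases Nat.eq_zero_or_pos c with hc0 | hcpos
    · have hCempty : C = ∅ := Finset.card_eq_zero.mp hc0
      have hS10 : S1 = 0 := by rw [hS1, hCempty]; simp
      have hS20 : S2 = 0 := by rw [hS2, hCempty]; simp
      rw [hS10, hc0] at hS1val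
      push_cast at hS1val
      have : (n : ℤ) = 2 := by linarith
      rw [hS20, this]; norm_num
    · have hcs : S1 ^ 2 ≤ (c : ℤ) * S2 := by
        have := sq_sum_le_card_mul_sum_sq (s := C) (f := fun v => (G.degree v : ℤ))
        simpa [hS1, hS2, hc] using this
      have hsq : 8 * ((n : ℤ) - 2) * c ≤ S1 ^ 2 := by
        rw [hS1val]
        nlinarith [sq_nonneg ((n : ℤ) - 2 - 2 * c)]
      have hcpos' : (0 : ℤ) < c := by exact_mod_cast hcpos
      nlinarith
  rw [hsqsum]
  linarith
end

section
/- For any tree T with n ≥ 2 pendent vertices where n is odd, M_1(T) ≥ 9n - 15. -/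
/-- For any tree `T` with `n ≥ 2` pendent vertices where `n` is odd, `M₁(T) ≥ 9n - 15`. -/
theorem stmt_3 {V : Type*} [Fintype V] (G : SimpleGraph V) [DecidableRel G.Adj]
    (hT : G.IsTree) (n : ℕ) (hn : 2 ≤ n) (hodd : Odd n)
    (hpend : (Finset.univ.filter fun v => G.degree v = 1).card = n) :
    9 * (n : ℤ) - 15 ≤ ∑ v : V, (G.degree v : ℤ) ^ 2 := by
  classical
  set L : Finset V := Finset.univ.filter fun v => G.degree v = 1 with hL
  set I : Finset V := Finset.univ.filter fun v => ¬ (G.degree v = 1) with hI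
  have hVcard : 2 ≤ Fintype.card V := by
    calc 2 ≤ n := hn
    _ = L.card := hpend.symm
    _ ≤ Fintype.card V := by simpa using Finset.card_filter_le Finset.univ _
  -- every vertex has positive degree
  have hdegpos : ∀ v : V, 0 < G.degree v := by
    intro v
    obtain ⟨w, hw⟩ := Fintype.exists_ne_of_one_lt_card (by omega) v
    obtain ⟨p⟩ := hT.isConnected.preconnected v w
    rw [SimpleGraph.degree_pos_iff_exists_adj]
    exact ⟨p.getVert 1, p.adj_snd (SimpleGraph.Walk.not_nil_of_ne (Ne.symm hw))⟩
  have hIdeg : ∀ v ∈ I, 2 ≤ G.degree v := by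
    intro v hv
    rw [hI, Finset.mem_filter] at hv
    have := hdegpos v
    omega
  -- degree sum
  have hsum : ∑ v : V, G.degree v = 2 * (Fintype.card V - 1) := by
    rw [G.sum_degrees_eq_twice_card_edges]
    have := hT.card_edgeFinset
    omega
  have hsplit : ∑ v : V, G.degree v = ∑ v ∈ L, G.degree v + ∑ v ∈ I, G.degree v := by
    rw [hL, hI]
    exact (Finset.sum_filter_add_sum_filter_not _ _ _).symm
  have hLsum : ∑ v ∈ L, G.degree v = n := by
    calc ∑ v ∈ L, G.degree v = ∑ v ∈ L, 1 := Finset.sum_congr rfl (fun v hv => by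
          simp only [hL, Finset.mem_filter] at hv; exact hv.2)
    _ = L.card := by simp
    _ = n := hpend
  have hcardI : L.card + I.card = Fintype.card V := by
    rw [hL, hI, ← Finset.card_univ]
    exact Finset.card_filter_add_card_filter_not _
  -- sum of internal degrees is odd
  have hIsumodd : Odd (∑ v ∈ I, G.degree v) := by
    have heven : Even (∑ v : V, G.degree v) := by rw [hsum]; exact even_two_mul _
    rw [hsplit, hLsum] at heven
    rcases Nat.even_or_odd (∑ v ∈ I, G.degree v) with h | h
    · exfalso
      have := (Nat.even_add.mp heven)
      rcases hodd with ⟨k, hk⟩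
      have : Even n := this.mpr h
      rcases this with ⟨j, hj⟩
      omega
    · exact h
  -- there is an internal vertex of odd degree
  have hex : ∃ v ∈ I, Odd (G.degree v) := by
    by_contra h
    push_neg at h
    have : Even (∑ v ∈ I, G.degree v) := by
      apply Finset.even_sum
      intro v hv
      exact Nat.not_odd_iff_even.mp (h v hv)
    exact (Nat.not_even_iff_odd.mpr hIsumodd) this
  obtain ⟨v0, hv0I, hv0odd⟩ := hex
  -- key pointwise bounds over ℤ
  have key : ∀ v ∈ I, 8 * (G.degree v : ℤ) - 16 ≤ (G.degree v : ℤ) ^ 2 := by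
    intro v hv
    have h2 : (2 : ℤ) ≤ (G.degree v : ℤ) := by exact_mod_cast hIdeg v hv
    nlinarith [sq_nonneg ((G.degree v : ℤ) - 4)]
  have key0 : 8 * (G.degree v0 : ℤ) - 15 ≤ (G.degree v0 : ℤ) ^ 2 := by
    have hne : G.degree v0 ≠ 4 := by
      intro h; rw [h] at hv0odd; exact (by decide : ¬ Odd 4) hv0odd
    have h1 : ((G.degree v0 : ℤ) - 4) ^ 2 ≥ 1 := by
      have : (G.degree v0 : ℤ) - 4 ≠ 0 := by
        intro h; apply hne; omega
      have := sq_pos_of_ne_zero this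
      omega
    nlinarith
  -- sum over I
  have hIsum2 : 8 * (∑ v ∈ I, (G.degree v : ℤ)) - 16 * I.card + 1 ≤ ∑ v ∈ I, (G.degree v : ℤ) ^ 2 := by
    rw [← Finset.sum_erase_add I (fun v => (G.degree v : ℤ) ^ 2) hv0I,
      ← Finset.sum_erase_add I (fun v => (G.degree v : ℤ)) hv0I]
    have h1 : ∑ v ∈ I.erase v0, (8 * (G.degree v : ℤ) - 16) ≤ ∑ v ∈ I.erase v0, (G.degree v : ℤ) ^ 2 :=
      Finset.sum_le_sum (fun v hv => key v (Finset.mem_of_mem_erase hv))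
    rw [Finset.sum_sub_distrib, ← Finset.mul_sum, Finset.sum_const] at h1
    have hcard : (I.erase v0).card = I.card - 1 := Finset.card_erase_of_mem hv0I
    have hIpos : 1 ≤ I.card := Finset.card_pos.mpr ⟨v0, hv0I⟩
    have hcard' : ((I.erase v0).card : ℤ) = (I.card : ℤ) - 1 := by
      rw [hcard]; push_cast [Nat.cast_sub hIpos]; ring
    simp only [nsmul_eq_mul] at h1
    rw [hcard'] at h1
    linarith [key0, h1]
  -- total sum
  have htot : ∑ v : V, (G.degree v : ℤ) ^ 2 = (n : ℤ) + ∑ v ∈ I, (G.degree v : ℤ) ^ 2 := by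
    rw [show (Finset.univ : Finset V) = L ∪ I by
      rw [hL, hI]; simpa using (Finset.filter_union_filter_not_eq _ Finset.univ).symm]
    rw [Finset.sum_union (by rw [hL, hI]; exact Finset.disjoint_filter_filter_not _ _ _)]
    congr 1
    calc ∑ v ∈ L, (G.degree v : ℤ) ^ 2 = ∑ v ∈ L, 1 := Finset.sum_congr rfl (fun v hv => by
          simp only [hL, Finset.mem_filter] at hv; rw [hv.2]; norm_num)
    _ = (L.card : ℤ) := by simp
    _ = (n : ℤ) := by rw [hpend]
  -- arithmetic: ∑_I deg = 2(N-1) - n, card I = N - n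
  have hN1 : 1 ≤ Fintype.card V := by omega
  have hIdegsum : (∑ v ∈ I, (G.degree v : ℤ)) = 2 * (Fintype.card V : ℤ) - 2 - n := by
    have : ((∑ v : V, G.degree v : ℕ) : ℤ) = 2 * ((Fintype.card V : ℤ) - 1) := by
      rw [hsum]; push_cast [Nat.cast_sub hN1]; ring
    rw [hsplit, hLsum] at this
    push_cast at this
    linarith
  have hIcard : (I.card : ℤ) = (Fintype.card V : ℤ) - n := by
    have := hcardI
    rw [hpend] at this
    omega
  rw [htot]
  rw [hIdegsum, hIcard] at hIsum2
  linarith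
end

section
/- For every odd n ≥ 3 there exists a tree T with exactly n pendent vertices in which all internal vertices have degree 4 except exactly one of degree 3, and for such a tree M_1(T) = 9n - 15. -/
/-!
For d ∈ {1, 3, 4} one has d² = 8(d - 2) + 9·[d = 1] + [d = 3]; summing over the vertices of a
tree, where ∑ (d - 2) = 2|E| - 2|V| = -2, gives M₁ = 9·n₁ + n₃ - 16, which is 9n - 15 when
n₁ = n and n₃ = 1.

For n = 2a + 3 such a tree lives on the vertices 0, …, 3a + 3 with parent (x - 1) / 3 for x > 0:
the root has the three children 1, 2, 3, each of 1, …, a has three children and a parent, and the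
remaining 2a + 3 vertices are leaves.
-/

open scoped Classical

open Finset

namespace Fin

variable {m : ℕ}

theorem card_filter_val_ne_zero : #{x : Fin m | x.val ≠ 0} = m - 1 := by
  cases m <;> simp [card_filter_univ_succ']

theorem card_filter_univ_val (P : ℕ → Prop) [DecidablePred P] :
    #{x : Fin m | P x.val} = #{x ∈ Iio m | P x} := by
  rw [← card_map valEmbedding, ← map_valEmbedding_univ, filter_map]
  rfl

end Fin

namespace SimpleGraph

variable {V : Type*} {G : SimpleGraph V} [Fintype V] [DecidableRel G.Adj]

theorem IsTree.sum_degree_sub_two (hG : G.IsTree) : ∑ v, ((G.degree v : ℤ) - 2) = -2 := by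
  rw [sum_sub_distrib, ← Nat.cast_sum, G.sum_degrees_eq_twice_card_edges, sum_const, card_univ,
    ← hG.card_edgeFinset]
  push_cast
  ring

theorem IsTree.sum_sq_degree_eq (hG : G.IsTree)
    (hdeg : ∀ v, G.degree v = 1 ∨ G.degree v = 3 ∨ G.degree v = 4) :
    ∑ v, (G.degree v : ℤ) ^ 2 = 9 * #{v | G.degree v = 1} + #{v | G.degree v = 3} - 16 := by
  have hpt : ∀ v, (G.degree v : ℤ) ^ 2 = 8 * ((G.degree v : ℤ) - 2)
      + 9 * (if G.degree v = 1 then 1 else 0) + (if G.degree v = 3 then 1 else 0) := by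
    intro v
    rcases hdeg v with h | h | h <;> simp [h]
  simp only [hpt, sum_add_distrib, ← mul_sum, hG.sum_degree_sub_two, sum_boole]
  ring

def parentGraph (m : ℕ) (p : ℕ → ℕ) : SimpleGraph (Fin m) :=
  fromRel fun x y => x.val ≠ 0 ∧ y.val = p x.val

variable {m : ℕ} {p : ℕ → ℕ}

theorem parentGraph_adj (hp : ∀ x, x ≠ 0 → p x < x) {u v : Fin m} :
    (parentGraph m p).Adj u v ↔
      (u.val ≠ 0 ∧ v.val = p u.val) ∨ (v.val ≠ 0 ∧ u.val = p v.val) := by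
  rw [parentGraph, fromRel_adj, and_iff_right_iff_imp]
  rintro (⟨hu, h⟩ | ⟨hv, h⟩) rfl <;> linarith [hp _ ‹_›]

theorem parentGraph_reachable_zero (hm : 0 < m) (hp : ∀ x, x ≠ 0 → p x < x) (v : Fin m) :
    (parentGraph m p).Reachable ⟨0, hm⟩ v := by
  induction h : v.val using Nat.strong_induction_on generalizing v with
  | _ k ih =>
    by_cases hk : k = 0
    · rw [show v = ⟨0, hm⟩ from Fin.ext (h.trans hk)]
    · have hpv := hp k hk
      let u : Fin m := ⟨p k, by omega⟩
      have hadj : (parentGraph m p).Adj u v :=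
        (parentGraph_adj hp).2 (Or.inr ⟨by omega, h ▸ rfl⟩)
      exact (ih _ hpv u rfl).trans hadj.reachable

theorem parentGraph_connected (hm : 0 < m) (hp : ∀ x, x ≠ 0 → p x < x) :
    (parentGraph m p).Connected :=
  (connected_iff_exists_forall_reachable _).2 ⟨_, parentGraph_reachable_zero hm hp⟩

theorem degree_parentGraph (hp : ∀ x, x ≠ 0 → p x < x) (v : Fin m)
    [Fintype ((parentGraph m p).neighborSet v)] :
    (parentGraph m p).degree v = #{x : Fin m | x.val ≠ 0 ∧ p x.val = v.val}
      + if v.val = 0 then 0 else 1 := by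
  have hparent : #{x : Fin m | v.val ≠ 0 ∧ x.val = p v.val} = if v.val = 0 then 0 else 1 := by
    split_ifs with hv
    · simp [hv]
    · have hpv := hp _ hv
      rw [card_eq_one]
      exact ⟨⟨p v.val, by omega⟩, by ext x; simp [Fin.ext_iff, hv]⟩
  have hdisj : Disjoint (α := Finset (Fin m)) {x | x.val ≠ 0 ∧ p x.val = v.val}
      {x | v.val ≠ 0 ∧ x.val = p v.val} := by
    rw [disjoint_filter]
    rintro x - ⟨hx, hxv⟩ ⟨hv, hvx⟩
    linarith [hp _ hx, hp _ hv]
  rw [← card_neighborFinset_eq_degree, ← hparent, ← card_union_of_disjoint hdisj]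
  congr 1
  ext x
  simp only [mem_neighborFinset, mem_filter, mem_univ, true_and, mem_union, parentGraph_adj hp]
  tauto

theorem sum_card_children_parentGraph (hp : ∀ x, x ≠ 0 → p x < x) :
    ∑ v : Fin m, #{x : Fin m | x.val ≠ 0 ∧ p x.val = v.val} = m - 1 := by
  rw [← Fin.card_filter_val_ne_zero, card_eq_sum_card_fiberwise (f := fun x : Fin m => p x.val)
    (t := range m), ← Fin.sum_univ_eq_sum_range]
  · simp only [filter_filter]
  · intro x hx
    simp only [coe_filter, mem_univ, true_and, Set.mem_ofPred_eq] at hx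
    simp only [coe_range, Set.mem_Iio]
    linarith [hp _ hx, x.isLt]

theorem parentGraph_isTree (hm : 0 < m) (hp : ∀ x, x ≠ 0 → p x < x) :
    (parentGraph m p).IsTree := by
  refine isTree_iff_connected_and_card.2 ⟨parentGraph_connected hm hp, ?_⟩
  have h := (parentGraph m p).sum_degrees_eq_twice_card_edges
  simp only [degree_parentGraph hp, sum_add_distrib, sum_card_children_parentGraph hp,
    sum_ite, sum_const_zero, sum_const, smul_eq_mul, mul_one, zero_add,
    Fin.card_filter_val_ne_zero] at h
  rw [Nat.card_eq_fintype_card, ← edgeFinset_card, Nat.card_eq_fintype_card, Fintype.card_fin]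
  omega

def ternaryHeap (m : ℕ) : SimpleGraph (Fin m) :=
  parentGraph m fun x => (x - 1) / 3

theorem ternaryHeap_isTree (hm : 0 < m) : (ternaryHeap m).IsTree :=
  parentGraph_isTree hm fun x hx => by omega

theorem card_children_ternaryHeap (a v : ℕ) :
    #{x : Fin (3 * a + 4) | x.val ≠ 0 ∧ (x.val - 1) / 3 = v} = if v ≤ a then 3 else 0 := by
  rw [Fin.card_filter_univ_val (fun x => x ≠ 0 ∧ (x - 1) / 3 = v)]
  split_ifs with hv
  · rw [show {x ∈ Iio (3 * a + 4) | x ≠ 0 ∧ (x - 1) / 3 = v} = Icc (3 * v + 1) (3 * v + 3) by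
      ext x; simp only [mem_filter, mem_Iio, mem_Icc]; omega]
    simp
  · rw [card_eq_zero, filter_eq_empty_iff]
    intro x hx
    simp only [mem_Iio] at hx
    omega

theorem degree_ternaryHeap (a : ℕ) (v : Fin (3 * a + 4))
    [Fintype ((ternaryHeap (3 * a + 4)).neighborSet v)] :
    (ternaryHeap (3 * a + 4)).degree v = if v.val = 0 then 3 else if v.val ≤ a then 4 else 1 := by
  refine (@degree_parentGraph _ (fun x => (x - 1) / 3) (fun x hx => by omega) v ‹_›).trans ?_
  rw [card_children_ternaryHeap]
  split_ifs <;> omega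

theorem card_leaves_ternaryHeap (a : ℕ) :
    #{v : Fin (3 * a + 4) | (ternaryHeap (3 * a + 4)).degree v = 1} = 2 * a + 3 := by
  have hleaf : ∀ v : Fin (3 * a + 4), (ternaryHeap (3 * a + 4)).degree v = 1 ↔ a < v.val := by
    intro v
    rw [degree_ternaryHeap]
    split_ifs <;> omega
  simp only [hleaf]
  rw [Fin.card_filter_univ_val (a < ·), show {x ∈ Iio (3 * a + 4) | a < x} = Ioo a (3 * a + 4) by
    ext x; simp only [mem_filter, mem_Iio, mem_Ioo]; omega]
  simp
  omega

end SimpleGraph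

open SimpleGraph

/-- For every odd `n ≥ 3` there exists a tree with exactly `n` pendent vertices in which
all internal vertices have degree 4 except exactly one of degree 3, and any such tree
satisfies `M₁(T) = 9n - 15`. -/
theorem stmt_5 (n : ℕ) (hn : 3 ≤ n) (hodd : Odd n) :
    (∃ (m : ℕ) (G : SimpleGraph (Fin m)),
      G.IsTree ∧ (Finset.univ.filter fun v => G.degree v = 1).card = n ∧
      (∃! w : Fin m, G.degree w = 3) ∧
      (∀ v, G.degree v ≠ 1 → G.degree v ≠ 3 → G.degree v = 4)) ∧
    (∀ (V : Type) [Fintype V] (G : SimpleGraph V) [DecidableRel G.Adj],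
      G.IsTree → (Finset.univ.filter fun v => G.degree v = 1).card = n →
      (∃! w : V, G.degree w = 3) →
      (∀ v, G.degree v ≠ 1 → G.degree v ≠ 3 → G.degree v = 4) →
      ∑ v : V, (G.degree v : ℤ) ^ 2 = 9 * n - 15) := by
  obtain ⟨a, rfl⟩ : ∃ a, n = 2 * a + 3 := by
    obtain ⟨k, rfl⟩ := hodd
    exact ⟨k - 1, by omega⟩
  refine ⟨⟨3 * a + 4, ternaryHeap _, ternaryHeap_isTree (by omega), card_leaves_ternaryHeap a,
    ⟨0, by simp [degree_ternaryHeap], fun w hw => ?_⟩, fun v h1 h3 => ?_⟩,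
    fun V _ G _ hT hleaves hroot hinternal => ?_⟩
  · simp only [degree_ternaryHeap] at hw
    split_ifs at hw with h0 <;> first | exact Fin.ext h0 | omega
  · rw [degree_ternaryHeap] at h1 h3 ⊢
    split_ifs at h1 h3 ⊢ <;> omega
  · rw [hT.sum_sq_degree_eq (fun v => by have := hinternal v; omega), hleaves,
      (Fintype.existsUnique_iff_card_one _).1 hroot]
    push_cast
    ring
end

section
/- Let c : ℕ → ℝ≥0 be a nonnegative function, n ≥ 2, and let Δ(n) ∈ argmin_{d ∈ {3,...,n}} c(d)/(d-2) (with Δ(2) = 3). Then for any tree T with n pendent vertices, C(T) := Σ_{v∈V(T)} c(d_T(v)) ≥ n·c(1) + (n-2)·c(Δ(n))/(Δ(n)-2). -/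
/-- Lower bound for the generalized first-Zagreb-type index `C(T) = Σ_v c(d(v))`:
if `Δ` minimizes `c(d)/(d-2)` over `d ∈ {3, ..., n}` (with `Δ = 3` when `n = 2`),
then for any tree `T` with `n ≥ 2` pendent vertices,
`C(T) ≥ n·c(1) + (n-2)·c(Δ)/(Δ-2)`. -/
theorem stmt_6 {V : Type*} [Fintype V] (G : SimpleGraph V) [DecidableRel G.Adj]
    (hT : G.IsTree) (n : ℕ) (hn : 2 ≤ n)
    (hpend : (Finset.univ.filter fun v => G.degree v = 1).card = n)
    (c : ℕ → ℝ) (hc : ∀ k, 0 ≤ c k)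
    (Δ : ℕ) (hΔ3 : 3 ≤ Δ) (hΔ2 : n = 2 → Δ = 3) (hΔn : 2 < n → Δ ≤ n)
    (hmin : ∀ d : ℕ, 3 ≤ d → d ≤ n → c Δ / ((Δ : ℝ) - 2) ≤ c d / ((d : ℝ) - 2)) :
    (n : ℝ) * c 1 + ((n : ℝ) - 2) * (c Δ / ((Δ : ℝ) - 2)) ≤
      ∑ v : V, c (G.degree v) := by
  classical
  set L : Finset V := Finset.univ.filter fun v => G.degree v = 1 with hLdef
  set S : Finset V := Finset.univ.filter fun v => 3 ≤ G.degree v with hSdef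
  have hcardV : 2 ≤ Fintype.card V := by
    calc 2 ≤ n := hn
    _ = L.card := hpend.symm
    _ ≤ Fintype.card V := by simpa using Finset.card_filter_le Finset.univ _
  -- every vertex has positive degree
  have hdegpos : ∀ v : V, 0 < G.degree v := by
    intro v
    rw [SimpleGraph.degree_pos_iff_exists_adj]
    obtain ⟨w, hw⟩ := Fintype.exists_ne_of_one_lt_card hcardV v
    obtain ⟨p⟩ := hT.isConnected.preconnected v w
    exact ⟨_, p.adj_snd (p.not_nil_of_ne (Ne.symm hw))⟩
  -- degree sum identity over ℤ
  have hsum : ∑ v : V, ((G.degree v : ℤ) - 2) = -2 := by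
    have h1 : ∑ v : V, G.degree v = 2 * G.edgeFinset.card :=
      G.sum_degrees_eq_twice_card_edges
    have h2 : G.edgeFinset.card + 1 = Fintype.card V := hT.card_edgeFinset
    have h4 : ∑ v : V, ((G.degree v : ℤ)) = 2 * ((Fintype.card V : ℤ) - 1) := by
      have h5 := congrArg (fun k : ℕ => (k : ℤ)) h1
      have h6 := congrArg (fun k : ℕ => (k : ℤ)) h2
      push_cast at h5 h6
      rw [h5]
      linarith
    rw [Finset.sum_sub_distrib, h4]
    simp [Finset.card_univ]
    ring
  -- key identity: sum over S of (deg - 2) equals n - 2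
  have hkey : ∑ v ∈ S, ((G.degree v : ℤ) - 2) = (n : ℤ) - 2 := by
    have hsplit := Finset.sum_filter_add_sum_filter_not Finset.univ
      (fun v => G.degree v = 1) (fun v => ((G.degree v : ℤ) - 2))
    have hLsum : ∑ v ∈ L, ((G.degree v : ℤ) - 2) = -(n : ℤ) := by
      have : ∀ v ∈ L, ((G.degree v : ℤ) - 2) = -1 := by
        intro v hv
        rw [hLdef, Finset.mem_filter] at hv
        rw [hv.2]; norm_num
      rw [Finset.sum_congr rfl this]
      simp [← hpend, hLdef]
    have hrest : ∑ v ∈ Finset.univ.filter (fun v => ¬ G.degree v = 1),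
        ((G.degree v : ℤ) - 2) = ∑ v ∈ S, ((G.degree v : ℤ) - 2) := by
      refine (Finset.sum_subset ?_ ?_).symm
      · intro v hv
        rw [hSdef, Finset.mem_filter] at hv
        simp only [Finset.mem_filter, Finset.mem_univ, true_and]
        omega
      · intro v hv hv'
        simp only [hSdef, Finset.mem_filter, Finset.mem_univ, true_and, not_le] at hv'
        simp only [Finset.mem_filter, Finset.mem_univ, true_and] at hv
        have := hdegpos v
        have h2 : G.degree v = 2 := by omega
        rw [h2]; ring_nf
    rw [hLsum, hrest] at hsplit
    omega
  -- each vertex in S has degree ≤ n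
  have hdegle : ∀ v ∈ S, G.degree v ≤ n := by
    intro v hv
    have hle : ((G.degree v : ℤ) - 2) ≤ ∑ w ∈ S, ((G.degree w : ℤ) - 2) := by
      apply Finset.single_le_sum (fun w hw => ?_) hv
      rw [hSdef, Finset.mem_filter] at hw
      have := hw.2; omega
    rw [hkey] at hle
    omega
  -- disjointness
  have hdisj : Disjoint L S := by
    rw [Finset.disjoint_left]
    intro v hvL hvS
    rw [hLdef, Finset.mem_filter] at hvL
    rw [hSdef, Finset.mem_filter] at hvS
    omega
  set r : ℝ := c Δ / ((Δ : ℝ) - 2) with hrdef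
  have hr0 : 0 ≤ r := by
    apply div_nonneg (hc Δ)
    have : (3:ℝ) ≤ (Δ:ℝ) := by exact_mod_cast hΔ3
    linarith
  -- main chain
  have hsub : ∑ v ∈ L ∪ S, c (G.degree v) ≤ ∑ v : V, c (G.degree v) :=
    Finset.sum_le_sum_of_subset_of_nonneg (Finset.subset_univ _)
      (fun v _ _ => hc _)
  rw [Finset.sum_union hdisj] at hsub
  have hLval : ∑ v ∈ L, c (G.degree v) = (n : ℝ) * c 1 := by
    have : ∀ v ∈ L, c (G.degree v) = c 1 := by
      intro v hv
      rw [hLdef, Finset.mem_filter] at hv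
      rw [hv.2]
    rw [Finset.sum_congr rfl this, Finset.sum_const, ← hpend]
    simp [hLdef, mul_comm]
  have hSval : ((n : ℝ) - 2) * r ≤ ∑ v ∈ S, c (G.degree v) := by
    have hterm : ∀ v ∈ S, ((G.degree v : ℝ) - 2) * r ≤ c (G.degree v) := by
      intro v hv
      have h3le : 3 ≤ G.degree v := by
        rw [hSdef, Finset.mem_filter] at hv; exact hv.2
      have hpos : (0:ℝ) < (G.degree v : ℝ) - 2 := by
        have : (3:ℝ) ≤ (G.degree v : ℝ) := by exact_mod_cast h3le
        linarith
      have := hmin (G.degree v) h3le (hdegle v hv)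
      calc ((G.degree v : ℝ) - 2) * r
          ≤ ((G.degree v : ℝ) - 2) * (c (G.degree v) / ((G.degree v : ℝ) - 2)) :=
            mul_le_mul_of_nonneg_left this (le_of_lt hpos)
        _ = c (G.degree v) := by field_simp
    calc ((n : ℝ) - 2) * r = (∑ v ∈ S, ((G.degree v : ℝ) - 2)) * r := by
          congr 1
          have : ((∑ v ∈ S, ((G.degree v : ℤ) - 2) : ℤ) : ℝ) = ((n:ℤ) - 2 : ℤ) := by
            exact_mod_cast congrArg (fun k : ℤ => (k : ℝ)) hkey
          push_cast at this
          linarith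
      _ = ∑ v ∈ S, ((G.degree v : ℝ) - 2) * r := by rw [Finset.sum_mul]
      _ ≤ ∑ v ∈ S, c (G.degree v) := Finset.sum_le_sum hterm
  linarith
end

section
/- For any real α ≥ ln 2 / ln(4/3) and any tree T with n ≥ 2 pendent vertices, the zeroth-order general Randić index satisfies Σ_{v∈V(T)} d_T(v)^α ≥ n + (n-2)·3^α, with equality for trees in which every internal vertex has degree 3. -/
lemma log43_pos : 0 < Real.log (4/3) := Real.log_pos (by norm_num)

lemma alpha_ge_two {α : ℝ} (hα : Real.log 2 / Real.log (4 / 3) ≤ α) : (2:ℝ) ≤ α := by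
  refine le_trans ?_ hα
  rw [le_div_iff₀ log43_pos]
  have h : (2:ℝ) * Real.log (4/3) = Real.log ((4/3:ℝ)^(2:ℕ)) := by
    rw [Real.log_pow]; push_cast; ring
  rw [h]
  exact Real.log_le_log (by positivity) (by norm_num)

lemma pow43 {α : ℝ} (hα : Real.log 2 / Real.log (4 / 3) ≤ α) : (2:ℝ) ≤ (4/3:ℝ) ^ α := by
  have h1 : Real.log 2 ≤ Real.log (4/3) * α := by
    rw [div_le_iff₀ log43_pos] at hα; linarith
  rw [Real.rpow_def_of_pos (by norm_num) α]
  have := Real.exp_le_exp.2 h1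
  rwa [Real.exp_log (by norm_num)] at this

-- key pointwise lemma
lemma key {α : ℝ} (hα : Real.log 2 / Real.log (4 / 3) ≤ α) {d : ℕ} (hd : 2 ≤ d) :
    ((d:ℝ) - 2) * (3:ℝ) ^ α ≤ (d:ℝ) ^ α := by
  have h2 : (2:ℝ) ≤ α := alpha_ge_two hα
  have h43 := pow43 hα
  have h3pos : (0:ℝ) < (3:ℝ) ^ α := Real.rpow_pos_of_pos (by norm_num) α
  rcases Nat.lt_or_ge d 6 with h6 | h6
  · interval_cases d
    · simpa using (Real.rpow_pos_of_pos (by norm_num : (0:ℝ) < 2) α).le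
    · norm_num
    · -- d = 4 : 2*3^α ≤ 4^α = (4/3)^α * 3^α
      have : (4:ℝ) ^ α = (4/3:ℝ)^α * (3:ℝ)^α := by
        rw [← Real.mul_rpow (by norm_num) (by norm_num)]; norm_num
      push_cast
      rw [this]
      nlinarith
    · -- d = 5 : 3*3^α ≤ 5^α = (5/3)^α*3^α, (5/3)^α = (4/3)^α*(5/4)^α ≥ 2*(25/16)
      have h54 : ((5/4:ℝ))^(2:ℝ) ≤ (5/4:ℝ)^α :=
        Real.rpow_le_rpow_of_exponent_le (by norm_num) h2
      have h54v : ((5/4:ℝ))^(2:ℝ) = (25/16:ℝ) := by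
        rw [show (2:ℝ) = ((2:ℕ):ℝ) by norm_num, Real.rpow_natCast]; norm_num
      have h5 : (5:ℝ) ^ α = (4/3:ℝ)^α * ((5/4:ℝ)^α * (3:ℝ)^α) := by
        rw [← Real.mul_rpow (by norm_num) (by norm_num),
            ← Real.mul_rpow (by norm_num) (by norm_num)]
        norm_num
      have h54' : (25/16:ℝ) ≤ (5/4:ℝ)^α := h54v ▸ h54
      have h54pos : (0:ℝ) < (5/4:ℝ)^α := Real.rpow_pos_of_pos (by norm_num) α
      have hm : (25/8:ℝ) ≤ (4/3:ℝ)^α * (5/4:ℝ)^α := by nlinarith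
      have hm2 := mul_le_mul_of_nonneg_right hm h3pos.le
      push_cast
      rw [h5]
      nlinarith
  · -- d ≥ 6 : (d-2) ≤ (d/3)^2 ≤ (d/3)^α
    have hd3 : (1:ℝ) ≤ (d:ℝ)/3 := by
      have h3d : 3 ≤ d := by omega
      have : (3:ℝ) ≤ (d:ℝ) := by exact_mod_cast h3d
      linarith
    have hsq : ((d:ℝ)/3)^(2:ℝ) ≤ ((d:ℝ)/3)^α :=
      Real.rpow_le_rpow_of_exponent_le hd3 h2
    have hsqv : ((d:ℝ)/3)^(2:ℝ) = ((d:ℝ)/3)^(2:ℕ) := by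
      rw [show (2:ℝ) = ((2:ℕ):ℝ) by norm_num, Real.rpow_natCast]
    have hdr : (6:ℝ) ≤ (d:ℝ) := by exact_mod_cast h6
    have hle : ((d:ℝ) - 2) ≤ ((d:ℝ)/3)^(2:ℕ) := by
      rw [pow_two]; nlinarith
    have hmul : (d:ℝ)^α = ((d:ℝ)/3)^α * (3:ℝ)^α := by
      rw [← Real.mul_rpow (by positivity) (by norm_num)]
      norm_num
    rw [hmul]
    have := hle.trans (hsqv ▸ hsq)
    nlinarith


/-- For `α ≥ ln 2 / ln(4/3)` and any tree `T` with `n ≥ 2` pendent vertices, the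
zeroth-order general Randić index satisfies `Σ_v d(v)^α ≥ n + (n-2)·3^α`, with equality
for trees in which every internal vertex has degree 3. -/
theorem stmt_8 {V : Type*} [Fintype V] (G : SimpleGraph V) [DecidableRel G.Adj]
    (hT : G.IsTree) (n : ℕ) (hn : 2 ≤ n)
    (hpend : (Finset.univ.filter fun v => G.degree v = 1).card = n)
    (α : ℝ) (hα : Real.log 2 / Real.log (4 / 3) ≤ α) :
    (n : ℝ) + ((n : ℝ) - 2) * (3 : ℝ) ^ α ≤ ∑ v : V, (G.degree v : ℝ) ^ α ∧
    ((∀ v : V, G.degree v ≠ 1 → G.degree v = 3) →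
      ∑ v : V, (G.degree v : ℝ) ^ α = (n : ℝ) + ((n : ℝ) - 2) * (3 : ℝ) ^ α) := by
  classical
  have hVcard : 2 ≤ Fintype.card V := by
    calc 2 ≤ n := hn
    _ = (Finset.univ.filter fun v => G.degree v = 1).card := hpend.symm
    _ ≤ Finset.univ.card := Finset.card_filter_le _ _
    _ = Fintype.card V := Finset.card_univ
  -- every vertex has degree ≥ 1
  have hdeg1 : ∀ v : V, 1 ≤ G.degree v := by
    intro v
    obtain ⟨w, hw⟩ := Fintype.exists_ne_of_one_lt_card (by omega) v
    obtain ⟨p⟩ := hT.isConnected.preconnected v w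
    have hnil : ¬ p.Nil := SimpleGraph.Walk.not_nil_of_ne (Ne.symm hw)
    have hadj := (p.firstDart hnil).adj
    exact (G.degree_pos_iff_exists_adj v).2 ⟨_, hadj⟩
  -- degree sum formula
  have hsumR : ∑ v : V, (G.degree v : ℝ) = 2 * (Fintype.card V : ℝ) - 2 := by
    have h1 := G.sum_degrees_eq_twice_card_edges
    have h2 := hT.card_edgeFinset
    have : ∑ v : V, G.degree v = 2 * Fintype.card V - 2 := by omega
    have hc : (2:ℕ) ≤ 2 * Fintype.card V := by omega
    calc ∑ v : V, (G.degree v : ℝ) = ((∑ v : V, G.degree v : ℕ) : ℝ) := by push_cast; rfl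
      _ = ((2 * Fintype.card V - 2 : ℕ) : ℝ) := by rw [this]
      _ = 2 * (Fintype.card V : ℝ) - 2 := by push_cast [Nat.cast_sub hc]; ring
  set L := Finset.univ.filter (fun v => G.degree v = 1) with hLdef
  set M := Finset.univ.filter (fun v => ¬ G.degree v = 1) with hMdef
  have hsplit : ∀ f : V → ℝ, ∑ v ∈ L, f v + ∑ v ∈ M, f v = ∑ v : V, f v :=
    fun f => Finset.sum_filter_add_sum_filter_not Finset.univ _ f
  have hM2 : ∀ v ∈ M, 2 ≤ G.degree v := by
    intro v hv
    have := (Finset.mem_filter.1 hv).2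
    have := hdeg1 v
    omega
  -- sum over M of (deg - 2) equals n - 2
  have hsumM : ∑ v ∈ M, ((G.degree v : ℝ) - 2) = (n:ℝ) - 2 := by
    have hL2 : ∑ v ∈ L, ((G.degree v : ℝ) - 2) = -(n:ℝ) := by
      calc ∑ v ∈ L, ((G.degree v : ℝ) - 2) = ∑ v ∈ L, (-1 : ℝ) :=
            Finset.sum_congr rfl (fun v hv => by rw [(Finset.mem_filter.1 hv).2]; norm_num)
        _ = -(n:ℝ) := by rw [Finset.sum_const, hpend]; push_cast; ring
    have htot : ∑ v : V, ((G.degree v : ℝ) - 2) = -2 := by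
      rw [Finset.sum_sub_distrib, hsumR, Finset.sum_const, Finset.card_univ]
      push_cast; ring
    have := hsplit (fun v => (G.degree v : ℝ) - 2)
    rw [hL2, htot] at this
    linarith
  have hLsum : ∑ v ∈ L, (G.degree v : ℝ) ^ α = (n:ℝ) := by
    calc ∑ v ∈ L, (G.degree v : ℝ) ^ α = ∑ v ∈ L, (1 : ℝ) :=
          Finset.sum_congr rfl (fun v hv => by
            rw [(Finset.mem_filter.1 hv).2]; push_cast; rw [Real.one_rpow])
      _ = (n:ℝ) := by rw [Finset.sum_const, hpend]; push_cast; ring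
  have h3pos : (0:ℝ) < (3:ℝ) ^ α := Real.rpow_pos_of_pos (by norm_num) α
  constructor
  · have hMsum : ((n:ℝ) - 2) * (3:ℝ) ^ α ≤ ∑ v ∈ M, (G.degree v : ℝ) ^ α := by
      calc ((n:ℝ) - 2) * (3:ℝ) ^ α = (∑ v ∈ M, ((G.degree v : ℝ) - 2)) * (3:ℝ) ^ α := by
            rw [hsumM]
        _ = ∑ v ∈ M, ((G.degree v : ℝ) - 2) * (3:ℝ) ^ α := by rw [Finset.sum_mul]
        _ ≤ ∑ v ∈ M, (G.degree v : ℝ) ^ α :=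
            Finset.sum_le_sum (fun v hv => key hα (hM2 v hv))
    have := hsplit (fun v => (G.degree v : ℝ) ^ α)
    rw [hLsum] at this
    linarith
  · intro h3
    have hMdeg : ∀ v ∈ M, G.degree v = 3 := fun v hv => h3 v (Finset.mem_filter.1 hv).2
    have hcardM : (M.card : ℝ) = (n:ℝ) - 2 := by
      rw [← hsumM]
      calc (M.card : ℝ) = ∑ v ∈ M, (1:ℝ) := by rw [Finset.sum_const]; push_cast; ring
        _ = ∑ v ∈ M, ((G.degree v : ℝ) - 2) :=
            Finset.sum_congr rfl (fun v hv => by rw [hMdeg v hv]; norm_num)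
    have hMsum : ∑ v ∈ M, (G.degree v : ℝ) ^ α = ((n:ℝ) - 2) * (3:ℝ) ^ α := by
      calc ∑ v ∈ M, (G.degree v : ℝ) ^ α = ∑ v ∈ M, (3:ℝ) ^ α :=
            Finset.sum_congr rfl (fun v hv => by rw [hMdeg v hv]; norm_num)
        _ = (M.card : ℝ) * (3:ℝ) ^ α := by rw [Finset.sum_const, nsmul_eq_mul]
        _ = ((n:ℝ) - 2) * (3:ℝ) ^ α := by rw [hcardM]
    have := hsplit (fun v => (G.degree v : ℝ) ^ α)
    rw [hLsum, hMsum] at this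
    linarith
end
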